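/- arXiv:2512.09528 — 2 statements merged into one kernel-verified Lean document; each statement's English description precedes it below -/
import Mathlib

section
/- Let Γ be a subgroup of isometries of the Poincaré disk 𝔻 acting properly discontinuously, with a compact fundamental domain D containing 0 of diameter δ₀, such that ⋃_{β∈Γ} β(D) = 𝔻. Suppose β₁,…,β_p ∈ Γ are such that the hyperbolic circle ∂𝔻_{δ₀+1} = {ξ : d_P(0,ξ) = δ₀+1} is covered by ⋃_{k=1}^p β_k(D). Then for every ξ ∈ 𝔻 with d_P(0,ξ) > δ₀ + 1, there exists k ∈ {1,…,p} with d_P(β_k(0), ξ) ≤ d_P(0,ξ) − 1. -/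
/-- The Poincaré (hyperbolic) distance on the open unit disk of `ℂ`. -/
noncomputable def poincareDist (a b : ℂ) : ℝ :=
  Real.log ((1 + ‖a - b‖ / ‖1 - (starRingEnd ℂ) a * b‖) /
            (1 - ‖a - b‖ / ‖1 - (starRingEnd ℂ) a * b‖))

/-- The open unit disk in `ℂ`. -/
def unitDisc : Set ℂ := {z : ℂ | ‖z‖ < 1}

/-- A self-map of the unit disk which is an isometry for the Poincaré distance. -/
def IsDiscIsometry (φ : ℂ → ℂ) : Prop :=
  Set.MapsTo φ unitDisc unitDisc ∧
    ∀ a ∈ unitDisc, ∀ b ∈ unitDisc, poincareDist (φ a) (φ b) = poincareDist a b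

/-- A set of self-maps of the disk forming a group of Poincaré isometries. -/
def IsIsometryGroup (Γ : Set (ℂ → ℂ)) : Prop :=
  (∀ φ ∈ Γ, IsDiscIsometry φ) ∧ id ∈ Γ ∧ (∀ φ ∈ Γ, ∀ ψ ∈ Γ, φ ∘ ψ ∈ Γ) ∧
    ∀ φ ∈ Γ, ∃ ψ ∈ Γ, (∀ z ∈ unitDisc, ψ (φ z) = z) ∧ ∀ z ∈ unitDisc, φ (ψ z) = z

/-- Properly discontinuous action on the unit disk. -/
def ProperlyDiscontinuous (Γ : Set (ℂ → ℂ)) : Prop :=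
  ∀ K : Set ℂ, K ⊆ unitDisc → IsCompact K → {φ : ℂ → ℂ | φ ∈ Γ ∧ (φ '' K ∩ K).Nonempty}.Finite

/-! Write `d_P = 2 artanh ρ`, with `ρ(a, b) = |a - b| / |1 - ā b|` the pseudo-hyperbolic distance.
The addition law `artanh t - artanh s = artanh ((t - s) / (1 - s t))` yields additivity of `d_P`
along the radius through `ξ` and, combined with `ρ(b, c) ≥ (|c| - |b|) / (1 - |b| |c|)`, the triangle
inequality at `0`, which the isometries of `Γ` transport to every orbit point `β(0)`.
The point `ξ₁` of that radius with `d_P(0, ξ₁) = δ₀ + 1` lies in some `β_k(D)`, so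
`d_P(β_k(0), ξ) ≤ d_P(β_k(0), ξ₁) + d_P(ξ₁, ξ) ≤ δ₀ + (d_P(0, ξ) - δ₀ - 1)`. -/

open Real Set ComplexConjugate

noncomputable def pseudoHypDist (a b : ℂ) : ℝ := ‖a - b‖ / ‖1 - conj a * b‖

lemma norm_one_sub_conj_mul_sq (a b : ℂ) :
    ‖1 - conj a * b‖ ^ 2 = ‖a - b‖ ^ 2 + (1 - ‖a‖ ^ 2) * (1 - ‖b‖ ^ 2) := by
  simp only [Complex.sq_norm, Complex.normSq_apply, Complex.sub_re, Complex.sub_im,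
    Complex.mul_re, Complex.mul_im, Complex.conj_re, Complex.conj_im, Complex.one_re,
    Complex.one_im]
  ring

lemma norm_sub_lt_norm_one_sub_conj_mul {a b : ℂ} (ha : a ∈ unitDisc) (hb : b ∈ unitDisc) :
    ‖a - b‖ < ‖1 - conj a * b‖ := by
  have ha' : ‖a‖ < 1 := ha
  have hb' : ‖b‖ < 1 := hb
  have hab : 0 < (1 - ‖a‖ ^ 2) * (1 - ‖b‖ ^ 2) := by
    apply mul_pos <;> nlinarith [norm_nonneg a, norm_nonneg b]
  have := norm_one_sub_conj_mul_sq a b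
  exact lt_of_pow_lt_pow_left₀ 2 (norm_nonneg _) (by linarith)

lemma pseudoHypDist_mem_Ico {a b : ℂ} (ha : a ∈ unitDisc) (hb : b ∈ unitDisc) :
    pseudoHypDist a b ∈ Ico 0 1 := by
  have h := norm_sub_lt_norm_one_sub_conj_mul ha hb
  exact ⟨by unfold pseudoHypDist; positivity,
    (div_lt_one ((norm_nonneg _).trans_lt h)).2 h⟩

lemma poincareDist_eq_two_mul_artanh {a b : ℂ} (ha : a ∈ unitDisc) (hb : b ∈ unitDisc) :
    poincareDist a b = 2 * artanh (pseudoHypDist a b) := by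
  have h := pseudoHypDist_mem_Ico ha hb
  rw [artanh_eq_half_log ⟨by linarith [h.1], h.2.le⟩]
  simp only [poincareDist, pseudoHypDist]
  ring

lemma poincareDist_zero_left {z : ℂ} (hz : z ∈ unitDisc) : poincareDist 0 z = 2 * artanh ‖z‖ := by
  rw [poincareDist_eq_two_mul_artanh (by simp [unitDisc]) hz]
  simp [pseudoHypDist]

lemma poincareDist_zero_zero : poincareDist 0 0 = 0 := by
  simp [poincareDist]

lemma artanh_sub_artanh {s t : ℝ} (hs : s ∈ Ioo (-1) 1) (ht : t ∈ Ioo (-1) 1) :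
    artanh t - artanh s = artanh ((t - s) / (1 - s * t)) := by
  obtain ⟨hs₁, hs₂⟩ := hs
  obtain ⟨ht₁, ht₂⟩ := ht
  have hst : 1 - s * t ≠ 0 := by nlinarith
  have hz : (t - s) / (1 - s * t) ∈ Icc (-1) 1 := by
    constructor
    · rw [le_div_iff₀ (by nlinarith)]; nlinarith
    · rw [div_le_iff₀ (by nlinarith)]; nlinarith
  have hnum : 1 + (t - s) / (1 - s * t) = (1 - s) * (1 + t) / (1 - s * t) := by
    rw [eq_div_iff hst, add_mul, div_mul_cancel₀ _ hst]; ring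
  have hden : 1 - (t - s) / (1 - s * t) = (1 + s) * (1 - t) / (1 - s * t) := by
    rw [eq_div_iff hst, sub_mul, div_mul_cancel₀ _ hst]; ring
  have hratio : (1 + (t - s) / (1 - s * t)) / (1 - (t - s) / (1 - s * t)) =
      (1 + t) / (1 - t) / ((1 + s) / (1 - s)) := by
    have : 1 - t ≠ 0 := by linarith
    have : 1 + s ≠ 0 := by linarith
    rw [hnum, hden]
    field_simp
  have hT : 0 < (1 + t) / (1 - t) := div_pos (by linarith) (by linarith)
  have hS : 0 < (1 + s) / (1 - s) := div_pos (by linarith) (by linarith)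
  rw [artanh_eq_half_log ⟨hs₁.le, hs₂.le⟩, artanh_eq_half_log ⟨ht₁.le, ht₂.le⟩,
    artanh_eq_half_log hz, hratio, log_div hT.ne' hS.ne']
  ring

lemma div_le_pseudoHypDist {a b : ℂ} (ha : a ∈ unitDisc) (hb : b ∈ unitDisc) :
    (‖b‖ - ‖a‖) / (1 - ‖a‖ * ‖b‖) ≤ pseudoHypDist a b := by
  have ha' : ‖a‖ < 1 := ha
  have hb' : ‖b‖ < 1 := hb
  have hP : 0 ≤ (1 - ‖a‖ ^ 2) * (1 - ‖b‖ ^ 2) := by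
    apply mul_nonneg <;> nlinarith [norm_nonneg a, norm_nonneg b]
  have hst : 0 < 1 - ‖a‖ * ‖b‖ := by nlinarith [norm_nonneg a, norm_nonneg b]
  have hB : 1 - ‖a‖ * ‖b‖ ≤ ‖1 - conj a * b‖ := by
    simpa [norm_mul] using norm_sub_norm_le (1 : ℂ) (conj a * b)
  have hid := norm_one_sub_conj_mul_sq a b
  -- With `s = ‖a‖`, `t = ‖b‖`, `B = ‖1 - conj a * b‖`: as `(1 - st)² - (t - s)² = (1 - s²)(1 - t²)`,
  -- the squared claim reduces to `(1 - st)² ≤ B²`.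
  have hsq : ((‖b‖ - ‖a‖) * ‖1 - conj a * b‖) ^ 2 ≤ (‖a - b‖ * (1 - ‖a‖ * ‖b‖)) ^ 2 := by
    nlinarith [mul_le_mul_of_nonneg_left (pow_le_pow_left₀ hst.le hB 2) hP]
  have hlin := (abs_le_of_sq_le_sq' hsq (by positivity)).2
  rw [pseudoHypDist, div_le_div_iff₀ hst ((norm_nonneg _).trans_lt
    (norm_sub_lt_norm_one_sub_conj_mul ha hb))]
  linarith

lemma pseudoHypDist_ofReal_mul (s t : ℝ) {u : ℂ} (hu : ‖u‖ = 1) :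
    pseudoHypDist (s * u) (t * u) = |s - t| / |1 - s * t| := by
  have hconj : conj ((s : ℂ) * u) * (t * u) = ((s * t : ℝ) : ℂ) := by
    rw [map_mul, Complex.conj_ofReal, mul_mul_mul_comm, mul_comm (conj u), Complex.mul_conj,
      Complex.normSq_eq_norm_sq, hu]
    push_cast; ring
  rw [pseudoHypDist, hconj, ← sub_mul, norm_mul, hu, mul_one]
  norm_cast

lemma exists_poincareDist_zero_eq_and_eq_sub {ξ : ℂ} (hξ : ξ ∈ unitDisc) {c : ℝ} (hc : 0 ≤ c)
    (hcξ : c < poincareDist 0 ξ) :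
    ∃ ξ₁ ∈ unitDisc, poincareDist 0 ξ₁ = c ∧ poincareDist ξ₁ ξ = poincareDist 0 ξ - c := by
  rw [poincareDist_zero_left hξ] at hcξ ⊢
  set t := ‖ξ‖
  have ht : t ∈ Ioo (-1) 1 := ⟨by linarith [norm_nonneg ξ], hξ⟩
  set r := tanh (c / 2)
  have hr : r ∈ Ioo (-1) 1 := ⟨neg_one_lt_tanh _, tanh_lt_one _⟩
  have hartanh_r : artanh r = c / 2 := artanh_tanh _
  have hr0 : 0 ≤ r := by
    rw [← artanh_le_artanh_iff ⟨by norm_num, by norm_num⟩ hr, artanh_zero, hartanh_r]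
    linarith
  have hrt : r < t := by
    rw [← artanh_lt_artanh_iff hr ht]
    linarith
  have ht0 : (t : ℂ) ≠ 0 := by exact_mod_cast (hr0.trans_lt hrt).ne'
  set u := ξ / (t : ℂ)
  have hu : ‖u‖ = 1 := by
    rw [norm_div, Complex.norm_real, Real.norm_of_nonneg (norm_nonneg ξ),
      div_self (by exact_mod_cast ht0)]
  have hξu : ξ = (t : ℂ) * u := (mul_div_cancel₀ ξ ht0).symm
  have hnorm : ‖(r : ℂ) * u‖ = r := by
    rw [norm_mul, hu, mul_one, Complex.norm_real, Real.norm_of_nonneg hr0]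
  have hdisc : (r : ℂ) * u ∈ unitDisc := by
    show ‖(r : ℂ) * u‖ < 1
    rw [hnorm]; exact hr.2
  refine ⟨r * u, hdisc, ?_, ?_⟩
  · rw [poincareDist_zero_left hdisc, hnorm, hartanh_r]
    ring
  · have hρ : pseudoHypDist (r * u) ξ = (t - r) / (1 - r * t) := by
      rw [hξu, pseudoHypDist_ofReal_mul _ _ hu, abs_sub_comm, abs_of_pos (by linarith),
        abs_of_pos (by nlinarith [ht.2])]
    rw [poincareDist_eq_two_mul_artanh hdisc hξ, hρ, ← artanh_sub_artanh hr ht, hartanh_r]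
    ring

lemma poincareDist_zero_le_add {b c : ℂ} (hb : b ∈ unitDisc) (hc : c ∈ unitDisc) :
    poincareDist 0 c ≤ poincareDist 0 b + poincareDist b c := by
  have hs : ‖b‖ ∈ Ioo (-1) 1 := ⟨by linarith [norm_nonneg b], hb⟩
  have ht : ‖c‖ ∈ Ioo (-1) 1 := ⟨by linarith [norm_nonneg c], hc⟩
  have hρ := pseudoHypDist_mem_Ico hb hc
  have hradial : artanh ‖c‖ - artanh ‖b‖ ≤ artanh (pseudoHypDist b c) := by
    rw [artanh_sub_artanh hs ht]
    refine artanh_le_artanh ?_ hρ.2 (div_le_pseudoHypDist hb hc)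
    rw [lt_div_iff₀ (by nlinarith [hs.2, ht.2, norm_nonneg b])]
    nlinarith [hs.2, ht.2, norm_nonneg b, norm_nonneg c]
  rw [poincareDist_zero_left hb, poincareDist_zero_left hc, poincareDist_eq_two_mul_artanh hb hc]
  linarith

lemma IsIsometryGroup.poincareDist_le_add {Γ : Set (ℂ → ℂ)} (hΓ : IsIsometryGroup Γ) {φ : ℂ → ℂ}
    (hφ : φ ∈ Γ) {b c : ℂ} (hb : b ∈ unitDisc) (hc : c ∈ unitDisc) :
    poincareDist (φ 0) c ≤ poincareDist (φ 0) b + poincareDist b c := by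
  have h0 : (0 : ℂ) ∈ unitDisc := by simp [unitDisc]
  obtain ⟨ψ, hψ, hψφ, -⟩ := hΓ.2.2.2 φ hφ
  obtain ⟨hψ_maps, hψ_dist⟩ := hΓ.1 ψ hψ
  have hφ0 : φ 0 ∈ unitDisc := (hΓ.1 φ hφ).1 h0
  rw [← hψ_dist _ hφ0 _ hc, ← hψ_dist _ hφ0 _ hb, ← hψ_dist _ hb _ hc, hψφ 0 h0]
  exact poincareDist_zero_le_add (hψ_maps hb) (hψ_maps hc)

theorem stmt2_general (Γ : Set (ℂ → ℂ)) (hΓ : IsIsometryGroup Γ)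
    (D : Set ℂ) (hDsub : D ⊆ unitDisc) (h0D : (0 : ℂ) ∈ D)
    (δ₀ : ℝ) (hδ₀ : ∀ ζ ∈ D, ∀ ζ' ∈ D, poincareDist ζ ζ' ≤ δ₀)
    (p : ℕ) (β : Fin p → (ℂ → ℂ)) (hβ : ∀ k, β k ∈ Γ)
    (hβcover : {ξ : ℂ | ξ ∈ unitDisc ∧ poincareDist 0 ξ = δ₀ + 1} ⊆
      ⋃ k : Fin p, β k '' D) :
    ∀ ξ ∈ unitDisc, poincareDist 0 ξ > δ₀ + 1 →
      ∃ k : Fin p, poincareDist (β k 0) ξ ≤ poincareDist 0 ξ - 1 := by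
  intro ξ hξ hfar
  have hδ₀_nonneg : 0 ≤ δ₀ := poincareDist_zero_zero ▸ hδ₀ 0 h0D 0 h0D
  obtain ⟨ξ₁, hξ₁, hξ₁_circle, hξ₁ξ⟩ :=
    exists_poincareDist_zero_eq_and_eq_sub hξ (by linarith) hfar
  obtain ⟨k, ζ, hζ, rfl⟩ : ∃ k, ∃ ζ ∈ D, β k ζ = ξ₁ := by
    simpa using hβcover ⟨hξ₁, hξ₁_circle⟩
  refine ⟨k, ?_⟩
  have hnear : poincareDist (β k 0) (β k ζ) ≤ δ₀ := by
    rw [(hΓ.1 _ (hβ k)).2 0 (hDsub h0D) ζ (hDsub hζ)]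
    exact hδ₀ 0 h0D ζ hζ
  linarith [hΓ.poincareDist_le_add (hβ k) hξ₁ hξ]

/-- if `β₁,…,β_p` cover the hyperbolic circle of radius `δ₀+1` by copies of
the fundamental domain `D`, then any point at distance `> δ₀+1` from `0` is at distance
at most `d_P(0,ξ) − 1` from some `β_k(0)`. -/
theorem stmt2 (Γ : Set (ℂ → ℂ)) (hΓ : IsIsometryGroup Γ)
    (hΓpd : ProperlyDiscontinuous Γ)
    (D : Set ℂ) (hDcpt : IsCompact D) (hDsub : D ⊆ unitDisc) (h0D : (0 : ℂ) ∈ D)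
    (δ₀ : ℝ) (hδ₀ : ∀ ζ ∈ D, ∀ ζ' ∈ D, poincareDist ζ ζ' ≤ δ₀)
    (hcover : ∀ z ∈ unitDisc, ∃ β ∈ Γ, z ∈ β '' D)
    (p : ℕ) (β : Fin p → (ℂ → ℂ)) (hβ : ∀ k, β k ∈ Γ)
    (hβcover : {ξ : ℂ | ξ ∈ unitDisc ∧ poincareDist 0 ξ = δ₀ + 1} ⊆
      ⋃ k : Fin p, β k '' D) :
    ∀ ξ ∈ unitDisc, poincareDist 0 ξ > δ₀ + 1 →
      ∃ k : Fin p, poincareDist (β k 0) ξ ≤ poincareDist 0 ξ - 1 :=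
  stmt2_general Γ hΓ D hDsub h0D δ₀ hδ₀ p β hβ hβcover
end

section
/- Let f be a homeomorphism of a compact metric space T and ν an ergodic f-invariant measure. Suppose for every δ > 0 there exists ε > 0 such that the sequence a_n = ν{t ∈ T : ν(B_n^f(t,ε)) > exp(−(h_ν(f)−δ)n)} is summable, where B_n^f(t,ε) is the one-sided Bowen ball. Then for ν-almost every t, sup_{ε>0} liminf_{n→∞} −(1/n) log ν(B_n^{f,±}(t,ε)) ≥ 2·h_ν(f), where B_n^{f,±} is the two-sided Bowen ball. -/
open Filter MeasureTheory
open scoped ENNReal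

variable {T : Type*} [MetricSpace T] [CompactSpace T] [MeasurableSpace T] [BorelSpace T]

/-- A finite measurable partition of `T`, encoded by the map sending a point to the
element of the partition containing it. -/
structure FinMeasPartition (T : Type*) [MeasurableSpace T] where
  part : T → Set T
  mem_part : ∀ x, x ∈ part x
  measSet : ∀ x, MeasurableSet (part x)
  part_eq : ∀ x y, y ∈ part x → part y = part x
  finite_range : (Set.range part).Finite

/-- One-sided cell: the element of `⋁_{i=0}^{n-1} f^{-i} ξ` containing `x`. -/
def oneSidedCell (f : Equiv.Perm T) (P : FinMeasPartition T) (n : ℕ) (x : T) : Set T :=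
  {y : T | ∀ i : ℕ, i < n → (f ^ i) y ∈ P.part ((f ^ i) x)}

/-- Two-sided cell: the element of `⋁_{i=-n}^{n} f^{-i} ξ` containing `x`. -/
def twoSidedCell (f : Equiv.Perm T) (P : FinMeasPartition T) (n : ℕ) (x : T) : Set T :=
  {y : T | ∀ i : ℤ, |i| ≤ (n : ℤ) → (f ^ i) y ∈ P.part ((f ^ i) x)}

/-- Entropy of `f` with respect to the partition `P` and measure `ν`, defined via
`(1/n) H_ν(⋁_{i=0}^{n-1} f^{-i} ξ)` with `H_ν(η) = ∫ -log ν(cell_η(x)) dν(x)`. -/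
noncomputable def partitionEntropy (f : Equiv.Perm T) (ν : Measure T)
    (P : FinMeasPartition T) : ℝ :=
  Filter.liminf (fun n : ℕ =>
    (∫ x, -Real.log (ν (oneSidedCell f P n x)).toReal ∂ν) / n) Filter.atTop

/-- Kolmogorov–Sinai entropy `h_ν(f)`, as a supremum over finite measurable partitions. -/
noncomputable def ksEntropy (f : Equiv.Perm T) (ν : Measure T) : ℝ≥0∞ :=
  ⨆ P : FinMeasPartition T, ENNReal.ofReal (partitionEntropy f ν P)

/-- One-sided Bowen ball `B_n^f(t,ε)`. -/
def oneSidedBall (f : Equiv.Perm T) (n : ℕ) (t : T) (ε : ℝ) : Set T :=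
  {s : T | ∀ i : ℕ, i ≤ n → dist ((f ^ i) t) ((f ^ i) s) < ε}

/-- Two-sided Bowen ball `B_n^{f,±}(t,ε)`. -/
def twoSidedBall (f : Equiv.Perm T) (n : ℕ) (t : T) (ε : ℝ) : Set T :=
  {s : T | ∀ i : ℤ, |i| ≤ (n : ℤ) → dist ((f ^ i) t) ((f ^ i) s) < ε}

/-!
Shifting time by `n` turns the two-sided Bowen ball `B_n^{f,±}(t, ε)` into a subset of the
one-sided ball `B_{2n}^f(f^{-n} t, ε)`. As `f^{-n}` preserves `ν`, the set of `t` whose two-sided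
ball has measure above `exp(-2n(h - δ))` is no larger than the `2n`-th set of the summability
hypothesis, so by Borel–Cantelli almost every `t` eventually satisfies
`ν(B_n^{f,±}(t, ε)) ≤ exp(-2n(h - δ))`. Almost every `t` lies in the support of `ν`, where these
balls have positive measure, so the bound passes to `-log`; letting `δ → 0` along `1/(k+1)`
gives `2h`.
-/

open scoped Topology

section

variable {X : Type*}

theorem Equiv.Perm.continuous_zpow [TopologicalSpace X] {f : Equiv.Perm X} (hf : Continuous f)
    (hf' : Continuous f.symm) : ∀ k : ℤ, Continuous ⇑(f ^ k)
  | .ofNat n => by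
    rw [Int.ofNat_eq_natCast, zpow_natCast, Equiv.Perm.coe_pow]
    exact hf.iterate n
  | .negSucc n => by
    rw [zpow_negSucc, ← inv_pow, Equiv.Perm.coe_pow]
    exact hf'.iterate (n + 1)

theorem MeasureTheory.MeasurePreserving.perm_zpow_neg [MeasurableSpace X] {μ : Measure X}
    {f : Equiv.Perm X} (hf : MeasurePreserving f μ μ) (hf' : Measurable f.symm) (n : ℕ) :
    MeasurePreserving ⇑(f ^ (-n : ℤ)) μ μ := by
  have hsymm : MeasurePreserving f.symm μ μ := hf.symm ⟨f, hf.measurable, hf'⟩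
  rw [zpow_neg, zpow_natCast, ← inv_pow, Equiv.Perm.coe_pow]
  exact hsymm.iterate n

theorem MeasureTheory.ae_eventually_notMem_of_summable_toReal [MeasurableSpace X]
    {μ : Measure X} [IsFiniteMeasure μ] {s : ℕ → Set X}
    (hs : Summable fun n => (μ (s n)).toReal) : ∀ᵐ x ∂μ, ∀ᶠ n in atTop, x ∉ s n := by
  refine ae_eventually_notMem ?_
  have hsum := ENNReal.ofReal_tsum_of_nonneg (fun _ => ENNReal.toReal_nonneg) hs
  simp only [ENNReal.ofReal_toReal (measure_ne_top μ _)] at hsum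
  exact hsum ▸ ENNReal.ofReal_ne_top

end

section BowenBalls

variable {X : Type*} [MetricSpace X]

theorem twoSidedBall_subset_preimage_oneSidedBall (f : Equiv.Perm X) (n : ℕ) (t : X) (ε : ℝ) :
    twoSidedBall f n t ε ⊆
      ⇑(f ^ (-n : ℤ)) ⁻¹' oneSidedBall f (2 * n) ((f ^ (-n : ℤ)) t) ε := by
  intro s hs j hj
  have shift : ∀ y, (f ^ j) ((f ^ (-n : ℤ)) y) = (f ^ ((j : ℤ) - n)) y := fun y => by
    rw [← Equiv.Perm.mul_apply, ← zpow_natCast, ← zpow_add, ← sub_eq_add_neg]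
  rw [shift, shift]
  exact hs _ (abs_le.2 ⟨by omega, by omega⟩)

theorem twoSidedBall_mem_nhds {f : Equiv.Perm X} (hf : Continuous f) (hf' : Continuous f.symm)
    (n : ℕ) (t : X) {ε : ℝ} (hε : 0 < ε) : twoSidedBall f n t ε ∈ 𝓝 t := by
  have hclose : ∀ i : ℤ, ∀ᶠ s in 𝓝 t, (f ^ i) s ∈ Metric.ball ((f ^ i) t) ε := fun i =>
    (Equiv.Perm.continuous_zpow hf hf' i).continuousAt.eventually (Metric.ball_mem_nhds _ hε)
  filter_upwards [(eventually_all_finset (Finset.Icc (-n : ℤ) n)).2 fun i _ => hclose i] with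
    s hs i hi
  exact dist_comm ((f ^ i) s) _ ▸ hs i (Finset.mem_Icc.2 (abs_le.1 hi))

theorem ae_eventually_measure_twoSidedBall_le [MeasurableSpace X] {ν : Measure X}
    [IsFiniteMeasure ν] {f : Equiv.Perm X} (hf : MeasurePreserving f ν ν)
    (hf' : Measurable f.symm) {ε c : ℝ}
    (hsum : Summable fun n : ℕ =>
      (ν {t | ν (oneSidedBall f n t ε) > ENNReal.ofReal (Real.exp (-c * n))}).toReal) :
    ∀ᵐ t ∂ν, ∀ᶠ n : ℕ in atTop,
      ν (twoSidedBall f n t ε) ≤ ENNReal.ofReal (Real.exp (-(2 * c) * n)) := by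
  have hbad : ∀ n : ℕ,
      {t | ν (twoSidedBall f n t ε) > ENNReal.ofReal (Real.exp (-(2 * c) * n))} ⊆
        ⇑(f ^ (-n : ℤ)) ⁻¹'
          {t | ν (oneSidedBall f (2 * n) t ε) > ENNReal.ofReal (Real.exp (-c * ↑(2 * n)))} := by
    intro n t ht
    calc ENNReal.ofReal (Real.exp (-c * ↑(2 * n)))
        = ENNReal.ofReal (Real.exp (-(2 * c) * n)) := by push_cast; ring_nf
      _ < ν (twoSidedBall f n t ε) := ht
      _ ≤ ν (⇑(f ^ (-n : ℤ)) ⁻¹' oneSidedBall f (2 * n) ((f ^ (-n : ℤ)) t) ε) :=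
        measure_mono (twoSidedBall_subset_preimage_oneSidedBall f n t ε)
      _ ≤ ν (oneSidedBall f (2 * n) ((f ^ (-n : ℤ)) t) ε) :=
        (hf.perm_zpow_neg hf' n).measure_preimage_le _
  have hsum_two_sided : Summable fun n : ℕ =>
      (ν {t | ν (twoSidedBall f n t ε) > ENNReal.ofReal (Real.exp (-(2 * c) * n))}).toReal :=
    (hsum.comp_injective (mul_right_injective₀ two_ne_zero)).of_nonneg_of_le
      (fun _ => ENNReal.toReal_nonneg) fun n => ENNReal.toReal_mono (measure_ne_top ν _)
        ((measure_mono (hbad n)).trans ((hf.perm_zpow_neg hf' n).measure_preimage_le _))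
  filter_upwards [ae_eventually_notMem_of_summable_toReal hsum_two_sided] with t ht
  exact ht.mono fun n hn => not_lt.1 hn

end BowenBalls

theorem le_neg_log_div_of_le_exp {x a n : ℝ} (hx : 0 < x) (hn : 0 < n)
    (h : x ≤ Real.exp (-a * n)) : a ≤ -Real.log x / n := by
  have hlog : Real.log x ≤ -a * n := (Real.log_le_log hx h).trans_eq (Real.log_exp _)
  rw [le_div_iff₀ hn]
  linarith

theorem le_liminf_neg_log_div_of_eventually_le_exp {x : ℕ → ℝ} {a : ℝ} (hx : ∀ n, 0 < x n)
    (h : ∀ᶠ n in atTop, x n ≤ Real.exp (-a * n)) :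
    (a : EReal) ≤ liminf (fun n : ℕ => ((-Real.log (x n) / n : ℝ) : EReal)) atTop := by
  refine le_liminf_of_le (by isBoundedDefault) ?_
  filter_upwards [h, eventually_gt_atTop 0] with n hn hn0
  exact EReal.coe_le_coe_iff.2 (le_neg_log_div_of_le_exp (hx n) (Nat.cast_pos.2 hn0) hn)

/-- lower bound in the two-sided Brin–Katok theorem, under the
summability hypothesis for one-sided Bowen balls: for ν-a.e. `t`,
`sup_{ε>0} liminf_n −(1/n) log ν(B_n^{f,±}(t,ε)) ≥ 2·h_ν(f)`. -/
theorem stmt13 (f : Equiv.Perm T) (hf : Continuous f) (hf' : Continuous f.symm)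
    (ν : Measure T) [IsProbabilityMeasure ν] (herg : Ergodic (⇑f) ν)
    (hsum : ∀ δ : ℝ, 0 < δ → ∃ ε : ℝ, 0 < ε ∧
      Summable (fun n : ℕ =>
        (ν {t : T | ν (oneSidedBall f n t ε) >
          ENNReal.ofReal (Real.exp (-((ksEntropy f ν).toReal - δ) * n))}).toReal)) :
    ∀ᵐ t ∂ν,
      ((2 * (ksEntropy f ν).toReal : ℝ) : EReal) ≤
        ⨆ ε : {e : ℝ // 0 < e}, Filter.liminf
          (fun n : ℕ => ((-Real.log (ν (twoSidedBall f n t ε)).toReal / n : ℝ) : EReal))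
          Filter.atTop := by
  set h := (ksEntropy f ν).toReal
  choose ε hε hsumε using fun k : ℕ => hsum (1 / (k + 1)) Nat.one_div_pos_of_nat
  have hbound (k : ℕ) : ∀ᵐ t ∂ν, ∀ᶠ n : ℕ in atTop, ν (twoSidedBall f n t (ε k)) ≤
      ENNReal.ofReal (Real.exp (-(2 * (h - 1 / (k + 1))) * n)) :=
    ae_eventually_measure_twoSidedBall_le herg.toMeasurePreserving hf'.measurable (hsumε k)
  filter_upwards [ν.support_mem_ae, ae_all_iff.2 hbound] with t ht_supp ht
  have hpos (k n : ℕ) : 0 < (ν (twoSidedBall f n t (ε k))).toReal :=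
    ENNReal.toReal_pos ((ν.mem_support_iff_forall t).1 ht_supp _
      (twoSidedBall_mem_nhds hf hf' n t (hε k))).ne' (measure_ne_top ν _)
  have hk (k : ℕ) : ((2 * (h - 1 / (k + 1)) : ℝ) : EReal) ≤ ⨆ ε : {e : ℝ // 0 < e},
      liminf (fun n : ℕ => ((-Real.log (ν (twoSidedBall f n t ε)).toReal / n : ℝ) : EReal))
        atTop :=
    le_iSup_of_le ⟨ε k, hε k⟩ <| le_liminf_neg_log_div_of_eventually_le_exp (hpos k)
      ((ht k).mono fun n hn => ENNReal.toReal_le_of_le_ofReal (Real.exp_nonneg _) hn)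
  have hδ : Tendsto (fun k : ℕ => 2 * (h - 1 / (k + 1))) atTop (𝓝 (2 * h)) := by
    simpa using
      ((tendsto_const_nhds (x := h)).sub tendsto_one_div_add_atTop_nhds_zero_nat).const_mul 2
  exact le_of_tendsto' (EReal.tendsto_coe.2 hδ) hk
end
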